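/- Let Ω ⊆ ℝ^d be a connected open set (a domain) and H an open affine half-space. Then P_H(Ω) ∩ H = (Ω ∪ σ_H(Ω)) ∩ H is open and connected. -/

import Mathlib

open Set Metric MeasureTheory
open scoped ENNReal

noncomputable def sigmaH {d : ℕ} (h : EuclideanSpace ℝ (Fin d)) (c : ℝ)
    (x : EuclideanSpace ℝ (Fin d)) : EuclideanSpace ℝ (Fin d) :=
  x + (2 * (c - (inner ℝ x h : ℝ))) • h

def halfSp {d : ℕ} (h : EuclideanSpace ℝ (Fin d)) (c : ℝ) :
    Set (EuclideanSpace ℝ (Fin d)) :=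
  {x | (inner ℝ x h : ℝ) < c}

noncomputable def polz {d : ℕ} (h : EuclideanSpace ℝ (Fin d)) (c : ℝ)
    (A : Set (EuclideanSpace ℝ (Fin d))) : Set (EuclideanSpace ℝ (Fin d)) :=
  ((A ∪ sigmaH h c '' A) ∩ halfSp h c) ∪ (A ∩ sigmaH h c '' A)

noncomputable def dpolz {d : ℕ} (h : EuclideanSpace ℝ (Fin d)) (c : ℝ)
    (A : Set (EuclideanSpace ℝ (Fin d))) : Set (EuclideanSpace ℝ (Fin d)) :=
  ((A ∪ sigmaH h c '' A) ∩ (halfSp h c)ᶜ) ∪ (A ∩ sigmaH h c '' A)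

/-! The folding map, the identity on `{x | ⟪x, h⟫ ≤ c}` and `σ_H` on its complement, is continuous,
so it maps the domain `Ω` onto a connected set. That set contains `(Ω ∪ σ_H Ω) ∩ H`, and its
remaining points lie in `Ω ∩ ∂H`; near such a point `(Ω ∪ σ_H Ω) ∩ H` is a ball cut by `H`, a
nonempty convex set. Deleting from a connected set points near which the rest is (nonempty and)
preconnected at arbitrarily small scales leaves it connected. -/

open Filter Topology

theorem IsPreconnected.of_subset_of_forall_nhds_inter {X : Type*} [TopologicalSpace X]
    {s t : Set X} (ht : IsPreconnected t) (hst : s ⊆ t)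
    (hloc : ∀ x ∈ t \ s, ∀ W ∈ 𝓝 x,
      ∃ N ∈ 𝓝 x, N ⊆ W ∧ (N ∩ s).Nonempty ∧ IsPreconnected (N ∩ s)) :
    IsPreconnected s := by
  have hts : t ⊆ closure s := by
    intro x hx
    refine mem_closure_iff_nhds.2 fun W hW => ?_
    by_cases hxs : x ∈ s
    · exact ⟨x, mem_of_mem_nhds hW, hxs⟩
    · obtain ⟨N, -, hNW, ⟨z, hz⟩, -⟩ := hloc x ⟨hx, hxs⟩ W hW
      exact ⟨z, hNW hz.1, hz.2⟩
  rw [isPreconnected_iff_subset_of_disjoint] at ht ⊢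
  intro u v hu hv hsuv hsuv'
  -- the largest open sets meeting `s` only inside `u`, resp. `v`, cover `t`
  have hcover : t ⊆ interior (sᶜ ∪ u) ∪ interior (sᶜ ∪ v) := by
    intro x hx
    by_cases hxs : x ∈ s
    · exact (hsuv hxs).imp (interior_maximal subset_union_right hu ·)
        (interior_maximal subset_union_right hv ·)
    obtain ⟨N, hN, -, -, hNs⟩ := hloc x ⟨hx, hxs⟩ univ univ_mem
    have hNsuv : N ∩ s ∩ (u ∩ v) = ∅ :=
      subset_empty_iff.1 (hsuv' ▸ inter_subset_inter_left _ inter_subset_right)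
    exact (isPreconnected_iff_subset_of_disjoint.1 hNs u v hu hv
      (inter_subset_right.trans hsuv) hNsuv).imp
      (fun hNu => mem_interior_iff_mem_nhds.2 (mem_of_superset hN ((inter_subset _ _ _).1 hNu)))
      (fun hNv => mem_interior_iff_mem_nhds.2 (mem_of_superset hN ((inter_subset _ _ _).1 hNv)))
  have hdisj : t ∩ (interior (sᶜ ∪ u) ∩ interior (sᶜ ∪ v)) = ∅ := by
    refine eq_empty_of_forall_notMem fun x ⟨hx, hxu, hxv⟩ => ?_
    obtain ⟨z, ⟨hzu, hzv⟩, hzs⟩ := mem_closure_iff_nhds.1 (hts hx) _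
      (inter_mem (isOpen_interior.mem_nhds hxu) (isOpen_interior.mem_nhds hxv))
    have hzu' := (interior_subset hzu).resolve_left (not_not.2 hzs)
    have hzv' := (interior_subset hzv).resolve_left (not_not.2 hzs)
    exact (hsuv' ▸ ⟨hzs, hzu', hzv'⟩ : z ∈ (∅ : Set X))
  refine (ht _ _ isOpen_interior isOpen_interior hcover hdisj).imp (fun htu => ?_) (fun htv => ?_)
  · exact fun x hx => (interior_subset (htu (hst hx))).resolve_left (not_not.2 hx)
  · exact fun x hx => (interior_subset (htv (hst hx))).resolve_left (not_not.2 hx)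

theorem IsConnected.of_subset_of_forall_nhds_inter {X : Type*} [TopologicalSpace X]
    {s t : Set X} (ht : IsConnected t) (hst : s ⊆ t)
    (hloc : ∀ x ∈ t \ s, ∀ W ∈ 𝓝 x,
      ∃ N ∈ 𝓝 x, N ⊆ W ∧ (N ∩ s).Nonempty ∧ IsPreconnected (N ∩ s)) :
    IsConnected s := by
  refine ⟨?_, ht.2.of_subset_of_forall_nhds_inter hst hloc⟩
  obtain ⟨x, hx⟩ := ht.1
  by_cases hxs : x ∈ s
  · exact ⟨x, hxs⟩
  · obtain ⟨N, -, -, hNs, -⟩ := hloc x ⟨hx, hxs⟩ univ univ_mem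
    exact hNs.mono inter_subset_right

section Polarization

variable {d : ℕ} (h : EuclideanSpace ℝ (Fin d)) (c : ℝ)

lemma inner_sigmaH (hh : ‖h‖ = 1) (x : EuclideanSpace ℝ (Fin d)) :
    inner ℝ (sigmaH h c x) h = 2 * c - inner ℝ x h := by
  simp only [sigmaH, inner_add_left, real_inner_smul_left, real_inner_self_eq_norm_sq, hh]
  ring

lemma sigmaH_involutive (hh : ‖h‖ = 1) : Function.Involutive (sigmaH h c) := fun x => by
  rw [sigmaH, inner_sigmaH h c hh, sigmaH]
  module

lemma sigmaH_eq_self {x : EuclideanSpace ℝ (Fin d)} (hx : inner ℝ x h = c) :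
    sigmaH h c x = x := by
  simp [sigmaH, hx]

lemma continuous_sigmaH : Continuous (sigmaH h c) := by
  unfold sigmaH
  fun_prop

lemma isOpen_image_sigmaH (hh : ‖h‖ = 1) {Ω : Set (EuclideanSpace ℝ (Fin d))} (hΩ : IsOpen Ω) :
    IsOpen (sigmaH h c '' Ω) := by
  rw [(sigmaH_involutive h c hh).image_eq_preimage_symm]
  exact hΩ.preimage (continuous_sigmaH h c)

lemma mem_halfSp {x : EuclideanSpace ℝ (Fin d)} : x ∈ halfSp h c ↔ inner ℝ x h < c :=
  Iff.rfl

lemma isOpen_halfSp : IsOpen (halfSp h c) :=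
  isOpen_lt (continuous_id.inner continuous_const) continuous_const

lemma convex_halfSp : Convex ℝ (halfSp h c) :=
  convex_halfSpace_lt ⟨fun x y => inner_add_left x y h, fun r x => real_inner_smul_left x h r⟩ c

lemma polz_inter_halfSp (A : Set (EuclideanSpace ℝ (Fin d))) :
    polz h c A ∩ halfSp h c = (A ∪ sigmaH h c '' A) ∩ halfSp h c := by
  ext x
  simp only [polz, mem_inter_iff, mem_union]
  tauto

lemma ball_inter_halfSp_nonempty (hh : ‖h‖ = 1) {x : EuclideanSpace ℝ (Fin d)}
    (hx : inner ℝ x h ≤ c) {ε : ℝ} (hε : 0 < ε) : (ball x ε ∩ halfSp h c).Nonempty := by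
  refine ⟨x - (ε / 2) • h, ?_, ?_⟩
  · rw [mem_ball, dist_eq_norm, sub_sub_cancel_left, norm_neg, norm_smul, hh, mul_one,
      Real.norm_of_nonneg (half_pos hε).le]
    exact half_lt_self hε
  · simp only [mem_halfSp, inner_sub_left, real_inner_smul_left,
      real_inner_self_eq_norm_sq, hh]
    linarith

noncomputable def foldH (x : EuclideanSpace ℝ (Fin d)) : EuclideanSpace ℝ (Fin d) :=
  if inner ℝ x h ≤ c then x else sigmaH h c x

lemma continuous_foldH : Continuous (foldH h c) :=
  Continuous.if_le continuous_id (continuous_sigmaH h c) (continuous_id.inner continuous_const)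
    continuous_const fun _ hx => (sigmaH_eq_self h c hx).symm

variable {h c}

lemma subset_image_foldH (hh : ‖h‖ = 1) (Ω : Set (EuclideanSpace ℝ (Fin d))) :
    (Ω ∪ sigmaH h c '' Ω) ∩ halfSp h c ⊆ foldH h c '' Ω := by
  rintro x ⟨hxΩ | ⟨y, hy, rfl⟩, hxc⟩
  · exact ⟨x, hxΩ, if_pos hxc.le⟩
  · have hyc : ¬ inner ℝ y h ≤ c := by
      rw [mem_halfSp, inner_sigmaH h c hh] at hxc
      linarith
    exact ⟨y, hy, if_neg hyc⟩

lemma image_foldH_diff_subset (hh : ‖h‖ = 1) (Ω : Set (EuclideanSpace ℝ (Fin d))) :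
    foldH h c '' Ω \ ((Ω ∪ sigmaH h c '' Ω) ∩ halfSp h c) ⊆ Ω ∩ {x | inner ℝ x h = c} := by
  rintro _ ⟨⟨y, hy, rfl⟩, hyA⟩
  by_cases hyc : inner ℝ y h ≤ c
  · rw [foldH, if_pos hyc] at hyA ⊢
    exact ⟨hy, hyc.antisymm (not_lt.1 fun hlt => hyA ⟨Or.inl hy, hlt⟩)⟩
  · refine absurd ?_ hyA
    rw [foldH, if_neg hyc]
    refine ⟨Or.inr (mem_image_of_mem _ hy), ?_⟩
    rw [mem_halfSp, inner_sigmaH h c hh]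
    linarith

lemma exists_nhds_inter_preconnected (hh : ‖h‖ = 1) {Ω S : Set (EuclideanSpace ℝ (Fin d))}
    (hΩ : IsOpen Ω) {x : EuclideanSpace ℝ (Fin d)} (hxΩ : x ∈ Ω) (hxc : inner ℝ x h ≤ c)
    {W : Set (EuclideanSpace ℝ (Fin d))} (hW : W ∈ 𝓝 x) :
    ∃ N ∈ 𝓝 x, N ⊆ W ∧ (N ∩ ((Ω ∪ S) ∩ halfSp h c)).Nonempty ∧
      IsPreconnected (N ∩ ((Ω ∪ S) ∩ halfSp h c)) := by
  obtain ⟨ε, hε, hεW⟩ := Metric.mem_nhds_iff.1 (inter_mem (hΩ.mem_nhds hxΩ) hW)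
  have hN : ball x ε ∩ ((Ω ∪ S) ∩ halfSp h c) = ball x ε ∩ halfSp h c :=
    Subset.antisymm (inter_subset_inter_right _ inter_subset_right)
      fun z ⟨hzB, hzH⟩ => ⟨hzB, Or.inl (hεW hzB).1, hzH⟩
  refine ⟨ball x ε, ball_mem_nhds x hε, fun z hz => (hεW hz).2, ?_⟩
  rw [hN]
  exact ⟨ball_inter_halfSp_nonempty h c hh hxc hε,
    ((convex_ball x ε).inter (convex_halfSp h c)).isPreconnected⟩

end Polarization

/-- The polarization of a domain intersected with the half-space is a domain. -/
theorem stmt9 {d : ℕ} (h : EuclideanSpace ℝ (Fin d)) (c : ℝ) (hh : ‖h‖ = 1)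
    (Ω : Set (EuclideanSpace ℝ (Fin d))) (hΩo : IsOpen Ω) (hΩc : IsConnected Ω) :
    polz h c Ω ∩ halfSp h c = (Ω ∪ sigmaH h c '' Ω) ∩ halfSp h c ∧
    IsOpen (polz h c Ω ∩ halfSp h c) ∧
    IsConnected (polz h c Ω ∩ halfSp h c) := by
  rw [polz_inter_halfSp]
  refine ⟨rfl, (hΩo.union (isOpen_image_sigmaH h c hh hΩo)).inter (isOpen_halfSp h c), ?_⟩
  refine (hΩc.image _ (continuous_foldH h c).continuousOn).of_subset_of_forall_nhds_inter
    (subset_image_foldH hh Ω) fun x hx W hW => ?_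
  obtain ⟨hxΩ, hxc⟩ := image_foldH_diff_subset hh Ω hx
  exact exists_nhds_inter_preconnected hh hΩo hxΩ hxc.le hW
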